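/- arXiv:2208.04630 — 2 statements merged into one kernel-verified Lean document; each statement's English description precedes it below -/
import Mathlib

section
/- For every natural number n and every integer r that is a possible result of the underspecified function one_to_fib on input n (i.e., r ∈ R n), we have 1 ≤ r and r ≤ fib n. In other words, every value producible by one_to_fib(n) under any standard-compliant evaluation order lies between 1 and the n-th Fibonacci number. -/
def fibC : ℕ → ℕ
  | 0 => 1
  | 1 => 1
  | 2 => 1
  | n + 3 => fibC (n + 2) + fibC (n + 1)

def R : ℕ → Set ℤ
  | 0 => {1}
  | 1 => {1}
  | 2 => {1}
  | 3 => {1, 2}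
  | n + 4 => {r : ℤ | ∃ a ∈ R (n + 2), ∃ b ∈ R (n + 3),
      ∃ d ∈ ({0, 1} : Set ℤ), r = a + b - d}

theorem one_to_fib_in_range (n : ℕ) (r : ℤ) (hr : r ∈ R n) :
    1 ≤ r ∧ r ≤ (fibC n : ℤ) := by
  induction n using Nat.strong_induction_on generalizing r with
  | _ n ih =>
    match n with
    | 0 => simp [R] at hr; simp [hr, fibC]
    | 1 => simp [R] at hr; simp [hr, fibC]
    | 2 => simp [R] at hr; simp [hr, fibC]
    | 3 =>
      simp [R] at hr
      rcases hr with h | h <;> simp [h, fibC]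
    | n + 4 =>
      obtain ⟨a, ha, b, hb, d, hd, rfl⟩ := hr
      obtain ⟨ha1, ha2⟩ := ih (n + 2) (by omega) a ha
      obtain ⟨hb1, hb2⟩ := ih (n + 3) (by omega) b hb
      have hd' : d = 0 ∨ d = 1 := hd
      have : (fibC (n + 4) : ℤ) = fibC (n + 3) + fibC (n + 2) := by
        push_cast [fibC]; ring
      rcases hd' with rfl | rfl <;> constructor <;> omega
end

section
/- For every natural number n, the set of possible results of one_to_fib on input n is exactly the integer interval from 1 to the n-th Fibonacci number: R n = Set.Icc (1 : ℤ) (fib n). -/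
lemma fibC_pos (n : ℕ) : 1 ≤ fibC n := by
  induction n using Nat.strong_induction_on with
  | _ n ih =>
    match n with
    | 0 => simp [fibC]
    | 1 => simp [fibC]
    | 2 => simp [fibC]
    | n + 3 =>
      have := ih (n + 2) (by omega)
      simp [fibC]; omega

theorem R_eq_Icc (n : ℕ) : R n = Set.Icc (1 : ℤ) (fibC n : ℤ) := by
  induction n using Nat.strong_induction_on with
  | _ n ih =>
    match n with
    | 0 => ext x; simp [R, fibC]
    | 1 => ext x; simp [R, fibC]
    | 2 => ext x; simp [R, fibC]
    | 3 => ext x; simp [R, fibC]; omega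
    | n + 4 =>
      have h2 := ih (n + 2) (by omega)
      have h3 := ih (n + 3) (by omega)
      have p2 := fibC_pos (n + 2)
      have p3 := fibC_pos (n + 3)
      have hf : fibC (n + 4) = fibC (n + 3) + fibC (n + 2) := rfl
      ext r
      simp only [R, h2, h3, Set.mem_setOf_eq, Set.mem_Icc, Set.mem_insert_iff,
        Set.mem_singleton_iff, hf, Nat.cast_add]
      constructor
      · rintro ⟨a, ⟨ha1, ha2⟩, b, ⟨hb1, hb2⟩, d, hd, rfl⟩
        rcases hd with rfl | rfl <;> constructor <;> omega
      · rintro ⟨hr1, hr2⟩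
        by_cases h : r ≤ (fibC (n + 2) : ℤ)
        · exact ⟨r, ⟨hr1, h⟩, 1, ⟨le_refl 1, by exact_mod_cast p3⟩, 1, Or.inr rfl, by ring⟩
        · refine ⟨(fibC (n + 2) : ℤ), ⟨by exact_mod_cast p2, le_refl _⟩,
            r - fibC (n + 2), ⟨by omega, by omega⟩, 0, Or.inl rfl, by ring⟩
end
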